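/- Suppose H₁ and H₂ have equal Hilbert dimension, let {b_j}_{j∈J} be an orthonormal basis of H₂, and let T ⊆ J be finite. Then the set F(T) = { v ∈ H₁ ⊗ H₂ : ‖v‖ = 1 and, writing v = Σ_j v_j ⊗ b_j with v_j ∈ H₁, the family {v_j}_{j∈T} is linearly independent } is norm dense in the unit sphere of H₁ ⊗ H₂. -/

import Mathlib

/-!
Elementary tensors span a dense subspace, and every vector of that span has an expansion
`Σ_j f j ⊗ b j`. Since `#T ≤ dim H₁`, the finitely many coefficients `f j`, `j ∈ T`, can be moved
one at a time by an arbitrarily small amount off the span of the previously moved ones (a proper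
subspace has empty interior); this changes the vector by at most `Σ_{j ∈ T} ‖g j - f j‖`. So the
vectors with linearly independent coefficients on `T` are dense in `H₁ ⊗ H₂`, and as they form a
cone, radial projection carries this density to the unit sphere.
-/

open scoped InnerProductSpace

noncomputable section

/-- The (completed) Hilbert tensor product of two complex Hilbert spaces `H₁`, `H₂`,
presented as a Hilbert space `H` together with a bilinear map `tmul` (elementary tensors)
whose inner products multiply, whose elementary tensors span a dense subspace, and together
with the tensor product `map A B = A ⊗ B` of bounded operators. -/
structure HilbertTensor (H₁ H₂ H : Type*)
    [NormedAddCommGroup H₁] [InnerProductSpace ℂ H₁] [CompleteSpace H₁]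
    [NormedAddCommGroup H₂] [InnerProductSpace ℂ H₂] [CompleteSpace H₂]
    [NormedAddCommGroup H] [InnerProductSpace ℂ H] [CompleteSpace H] where
  tmul : H₁ →ₗ[ℂ] H₂ →ₗ[ℂ] H
  inner_tmul : ∀ x₁ y₁ x₂ y₂, ⟪tmul x₁ y₁, tmul x₂ y₂⟫_ℂ = ⟪x₁, x₂⟫_ℂ * ⟪y₁, y₂⟫_ℂ
  dense_span : Dense (↑(Submodule.span ℂ {z : H | ∃ x y, z = tmul x y}) : Set H)
  map : (H₁ →L[ℂ] H₁) → (H₂ →L[ℂ] H₂) → (H →L[ℂ] H)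
  map_tmul : ∀ A B x y, map A B (tmul x y) = tmul (A x) (B y)

variable {H₁ H₂ H : Type*}
  [NormedAddCommGroup H₁] [InnerProductSpace ℂ H₁] [CompleteSpace H₁]
  [NormedAddCommGroup H₂] [InnerProductSpace ℂ H₂] [CompleteSpace H₂]
  [NormedAddCommGroup H] [InnerProductSpace ℂ H] [CompleteSpace H]

/-- `v` is cyclic for the first factor: `{(A ⊗ I) v : A bounded on H₁}` is dense in `H`. -/
def HilbertTensor.CyclicFst (T : HilbertTensor H₁ H₂ H) (v : H) : Prop :=
  Dense (Set.range fun A : H₁ →L[ℂ] H₁ => T.map A 1 v)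

/-- An orthogonal projection on a Hilbert space: a self-adjoint idempotent bounded operator. -/
def IsONProj {E : Type*} [NormedAddCommGroup E] [InnerProductSpace ℂ E] [CompleteSpace E]
    (P : E →L[ℂ] E) : Prop :=
  IsSelfAdjoint P ∧ P ∘L P = P

/-- The algebra of the second factor is maximally correlated with the algebra of the first
factor in the state `v`. -/
def HilbertTensor.MaxCorrSndFst (T : HilbertTensor H₁ H₂ H) (v : H) : Prop :=
  ∀ P' : H₂ →L[ℂ] H₂, IsONProj P' → P' ≠ 0 → ∀ ε : ℝ, 0 < ε →
    ∃ P : H₁ →L[ℂ] H₁, IsONProj P ∧ P ≠ 0 ∧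
      0 < (⟪v, T.map P 1 v⟫_ℂ).re ∧
      (1 - ε) * (⟪v, T.map P 1 v⟫_ℂ).re ≤ (⟪v, T.map P P' v⟫_ℂ).re

/-- The orthogonal projection onto the span of a vector, as an operator `E →L[ℂ] E`. -/
def projSpan {E : Type*} [NormedAddCommGroup E] [InnerProductSpace ℂ E] [CompleteSpace E]
    (w : E) : E →L[ℂ] E :=
  (ℂ ∙ w).subtypeL ∘L (ℂ ∙ w).orthogonalProjection

theorem Submodule.dense_compl_of_ne_top {𝕜 E : Type*} [NontriviallyNormedField 𝕜]
    [NormedAddCommGroup E] [NormedSpace 𝕜 E] {K : Submodule 𝕜 E} (hK : K ≠ ⊤) :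
    Dense (K : Set E)ᶜ :=
  interior_eq_empty_iff_dense_compl.1 <|
    Set.not_nonempty_iff_eq_empty.1 fun h => hK (K.eq_top_of_nonempty_interior' h)

theorem exists_linearIndepOn_near {𝕜 E ι : Type*} [NontriviallyNormedField 𝕜]
    [NormedAddCommGroup E] [NormedSpace 𝕜 E] (s : Finset ι)
    (hs : (s.card : Cardinal) ≤ Module.rank 𝕜 E) (f : ι → E) {δ : ℝ} (hδ : 0 < δ) :
    ∃ g : ι → E, (∀ j ∉ s, g j = f j) ∧ ∑ j ∈ s, ‖g j - f j‖ < δ ∧ LinearIndepOn 𝕜 g s := by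
  classical
  induction s using Finset.induction_on generalizing δ with
  | empty => exact ⟨f, fun _ _ => rfl, by simpa using hδ, by simp⟩
  | @insert j₀ s hj₀ ih =>
    rw [Finset.card_insert_of_notMem hj₀] at hs
    obtain ⟨g, hg_off, hg_near, hg_indep⟩ :=
      ih ((Nat.cast_le.2 s.card.le_succ).trans hs) (half_pos hδ)
    have hspan : Submodule.span 𝕜 (g '' s) ≠ ⊤ := by
      intro htop
      have hrank := rank_span_finset_le (R := 𝕜) (s.image g)
      rw [Finset.coe_image, htop, rank_top] at hrank
      have := Nat.cast_le.1 (hs.trans (hrank.trans (Nat.cast_le.2 (s.card_image_le (f := g)))))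
      omega
    obtain ⟨y, hy_near, hy_indep⟩ :=
      Metric.dense_iff.1 (Submodule.dense_compl_of_ne_top hspan) (f j₀) (δ / 2) (half_pos hδ)
    have hupdate : Set.EqOn (Function.update g j₀ y) g s := fun j hj =>
      Function.update_of_ne (ne_of_mem_of_not_mem hj hj₀) _ _
    refine ⟨Function.update g j₀ y, fun j hj => ?_, ?_, ?_⟩
    · rw [Finset.mem_insert, not_or] at hj
      rw [Function.update_of_ne hj.1, hg_off j hj.2]
    · rw [Finset.sum_insert hj₀, Function.update_self, ← dist_eq_norm,
        Finset.sum_congr rfl fun j hj => by rw [hupdate hj]]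
      linarith [Metric.mem_ball.1 hy_near]
    · rw [Finset.coe_insert, linearIndepOn_insert (by simpa using hj₀),
        linearIndepOn_congr hupdate, Set.image_congr hupdate, Function.update_self]
      exact ⟨hg_indep, hy_indep⟩

theorem Dense.sphere_of_forall_pos_smul {E : Type*} [NormedAddCommGroup E] [NormedSpace ℝ E]
    {S : Set E} (hS : Dense S) (hsmul : ∀ v ∈ S, ∀ r : ℝ, 0 < r → r • v ∈ S) :
    Dense {v : Metric.sphere (0 : E) 1 | (v : E) ∈ S} := by
  let radial : ({0}ᶜ : Set E) → Metric.sphere (0 : E) 1 :=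
    Prod.fst ∘ homeomorphUnitSphereProd E
  have hcont : Continuous radial := continuous_fst.comp (homeomorphUnitSphereProd E).continuous
  have : Nonempty (Set.Ioi (0 : ℝ)) := Set.nonempty_Ioi.to_subtype
  have hsurj : Function.Surjective radial :=
    Prod.fst_surjective.comp (homeomorphUnitSphereProd E).surjective
  refine (hsurj.denseRange.dense_image hcont
    (hS.preimage isOpen_compl_singleton.isOpenMap_subtype_val)).mono ?_
  rintro _ ⟨v, hv, rfl⟩
  show ((homeomorphUnitSphereProd E v).1 : E) ∈ S
  rw [homeomorphUnitSphereProd_apply_fst_coe]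
  exact hsmul v hv _ (inv_pos.2 (norm_pos_iff.2 v.2))

namespace HilbertTensor

variable (T : HilbertTensor H₁ H₂ H)

theorem norm_tmul (x : H₁) (y : H₂) : ‖T.tmul x y‖ = ‖x‖ * ‖y‖ := by
  have h := T.inner_tmul x y x y
  simp only [inner_self_eq_norm_sq_to_K] at h
  rw [← sq_eq_sq₀ (norm_nonneg _) (by positivity), mul_pow]
  exact_mod_cast h

def tmulL (x : H₁) : H₂ →L[ℂ] H :=
  (T.tmul x).mkContinuous ‖x‖ fun y => (T.norm_tmul x y).le

theorem exists_hasSum_tmul_of_mem_span {J : Type*} (b : HilbertBasis J ℂ H₂) {u : H}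
    (hu : u ∈ Submodule.span ℂ {z : H | ∃ x y, z = T.tmul x y}) :
    ∃ f : J → H₁, HasSum (fun j => T.tmul (f j) (b j)) u := by
  induction hu using Submodule.span_induction with
  | mem z hz =>
    obtain ⟨x, y, rfl⟩ := hz
    refine ⟨fun j => b.repr y j • x, ?_⟩
    simpa [tmulL] using (b.hasSum_repr y).mapL (T.tmulL x)
  | zero => exact ⟨0, by simp⟩
  | add z₁ z₂ _ _ ih₁ ih₂ =>
    obtain ⟨f₁, hf₁⟩ := ih₁
    obtain ⟨f₂, hf₂⟩ := ih₂
    exact ⟨f₁ + f₂, by simpa using hf₁.add hf₂⟩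
  | smul c z _ ih =>
    obtain ⟨f, hf⟩ := ih
    exact ⟨c • f, by simpa using hf.const_smul c⟩

theorem hasSum_tmul_of_eq_off_finset {J : Type*} (e : J → H₂) {f g : J → H₁} {u : H}
    {s : Finset J} (hf : HasSum (fun j => T.tmul (f j) (e j)) u) (hfg : ∀ j ∉ s, g j = f j) :
    HasSum (fun j => T.tmul (g j) (e j)) (u + ∑ j ∈ s, T.tmul (g j - f j) (e j)) := by
  have hcorr : HasSum (fun j => T.tmul (g j - f j) (e j)) (∑ j ∈ s, T.tmul (g j - f j) (e j)) :=
    hasSum_sum_of_ne_finset_zero fun j hj => by rw [hfg j hj, sub_self, map_zero,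
      LinearMap.zero_apply]
  simpa using hf.add hcorr

def linIndepCoeffs {J : Type*} (e : J → H₂) (s : Set J) : Set H :=
  {w | ∃ f : J → H₁, HasSum (fun j => T.tmul (f j) (e j)) w ∧ LinearIndepOn ℂ f s}

theorem smul_mem_linIndepCoeffs {J : Type*} {e : J → H₂} {s : Set J} {w : H} {c : ℂ}
    (hc : c ≠ 0) (hw : w ∈ T.linIndepCoeffs e s) : c • w ∈ T.linIndepCoeffs e s := by
  obtain ⟨f, hf, hindep⟩ := hw
  exact ⟨c • f, by simpa using hf.const_smul c, hindep.units_smul fun _ => Units.mk0 c hc⟩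

theorem dense_linIndepCoeffs {J : Type*} (b : HilbertBasis J ℂ H₂) {s : Finset J}
    (hs : (s.card : Cardinal) ≤ Module.rank ℂ H₁) : Dense (T.linIndepCoeffs b s) := by
  refine Metric.dense_iff.2 fun x ε hε => ?_
  obtain ⟨u, hux, hu⟩ := Metric.dense_iff.1 T.dense_span x (ε / 2) (half_pos hε)
  obtain ⟨f, hf⟩ := T.exists_hasSum_tmul_of_mem_span b hu
  obtain ⟨g, hg_off, hg_near, hg_indep⟩ := exists_linearIndepOn_near s hs f (half_pos hε)
  refine ⟨_, ?_, g, T.hasSum_tmul_of_eq_off_finset b hf hg_off, hg_indep⟩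
  have hcorr : ‖∑ j ∈ s, T.tmul (g j - f j) (b j)‖ ≤ ∑ j ∈ s, ‖g j - f j‖ :=
    (norm_sum_le _ _).trans_eq <| Finset.sum_congr rfl fun j _ => by
      rw [T.norm_tmul, b.orthonormal.1 j, mul_one]
  calc dist (u + ∑ j ∈ s, T.tmul (g j - f j) (b j)) x
      ≤ ‖∑ j ∈ s, T.tmul (g j - f j) (b j)‖ + dist u x := by
        rw [← dist_self_add_left _ u]; exact dist_triangle _ _ _
    _ < ε / 2 + ε / 2 := add_lt_add_of_le_of_lt (hcorr.trans hg_near.le) hux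
    _ = ε := add_halves ε

end HilbertTensor

theorem FT_dense_in_unitSphere_general
    (T : HilbertTensor H₁ H₂ H)
    {I J : Type} (a : HilbertBasis I ℂ H₁) (b : HilbertBasis J ℂ H₂)
    (hdim : Cardinal.mk I = Cardinal.mk J) (Tf : Finset J) :
    Dense {v : Metric.sphere (0 : H) 1 | ∃ f : J → H₁,
      HasSum (fun j => T.tmul (f j) (b j)) (v : H) ∧
      LinearIndependent ℂ fun j : Tf => f j.1} := by
  have hcard : (Tf.card : Cardinal) ≤ Module.rank ℂ H₁ := by
    have hTf : (Tf.card : Cardinal) ≤ Cardinal.mk I := by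
      simpa [hdim] using Cardinal.mk_subtype_le (· ∈ Tf)
    simpa using (Cardinal.lift_le.2 hTf).trans a.orthonormal.linearIndependent.cardinal_lift_le_rank
  refine (T.dense_linIndepCoeffs b hcard).sphere_of_forall_pos_smul fun v hv r hr => ?_
  rw [← Complex.coe_smul]
  exact T.smul_mem_linIndepCoeffs (Complex.ofReal_ne_zero.2 hr.ne') hv

/-- if `H₁` and `H₂` have equal Hilbert dimension, `b` is an orthonormal basis
of `H₂`, and `Tf` is a finite set of basis indices, then the set `F(Tf)` of unit vectors
`v = Σ_j f j ⊗ b j` whose coefficient vectors `{f j}_{j ∈ Tf}` are linearly independent is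
norm dense in the unit sphere of `H₁ ⊗ H₂`. -/
theorem FT_dense_in_unitSphere
    [TopologicalSpace.SeparableSpace H₁] [TopologicalSpace.SeparableSpace H₂]
    (h₁ : 1 < Module.rank ℂ H₁) (h₂ : 1 < Module.rank ℂ H₂)
    (T : HilbertTensor H₁ H₂ H)
    {I J : Type} (a : HilbertBasis I ℂ H₁) (b : HilbertBasis J ℂ H₂)
    (hdim : Cardinal.mk I = Cardinal.mk J) (Tf : Finset J) :
    Dense {v : Metric.sphere (0 : H) 1 | ∃ f : J → H₁,
      HasSum (fun j => T.tmul (f j) (b j)) (v : H) ∧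
      LinearIndependent ℂ fun j : Tf => f j.1} :=
  FT_dense_in_unitSphere_general T a b hdim Tf

end
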